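/- Let k be a field of characteristic ≠ 2 equipped with a non-empty set V of non-trivial discrete valuations. If there are integers r, s ≥ 1 such that all quadratic forms over k satisfy LGP(r, s) with respect to V, then for any integer j (not necessarily positive) such that r + j ≥ 1 and s + j ≥ 1, all quadratic forms over k satisfy LGP(r + j, s + j) with respect to V. -/

import Mathlib

/-!  Diagonal quadratic forms over a field of characteristic ≠ 2.
In characteristic ≠ 2 every regular quadratic form is isometric to a diagonal form
`⟨d 1, …, d n⟩`, so we model (regular) quadratic forms by their diagonal
coefficient functions. -/

/-- The diagonal quadratic form `⟨d i⟩_{i : ι}` over `k`. -/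
noncomputable def diagQF (k : Type) [Field k] {ι : Type} [Fintype ι] (d : ι → k) :
    QuadraticForm k (ι → k) :=
  QuadraticMap.weightedSumSquares k d

/-- Isometry of (diagonal) quadratic forms. -/
def FormIsom (k : Type) [Field k] {ι κ : Type} [Fintype ι] [Fintype κ]
    (d : ι → k) (e : κ → k) : Prop :=
  QuadraticMap.Equivalent (diagQF k d) (diagQF k e)

/-- The orthogonal sum of `m` copies of the hyperbolic plane `⟨1, -1⟩`. -/
def hypForm (k : Type) [Field k] (m : ℕ) : Fin (2 * m) → k :=
  fun j => if j.val % 2 = 0 then 1 else -1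

/-- The Witt index of a (diagonal) form: the largest `m` such that the form is isometric
to `m·ℍ ⟂ (rest)` for some diagonal form `rest`. -/
noncomputable def wittIndex (k : Type) [Field k] {ι : Type} [Fintype ι] (d : ι → k) : ℕ :=
  sSup {m : ℕ | ∃ (s : ℕ) (e : Fin s → k), FormIsom k d (Sum.elim (hypForm k m) e)}
/-- The value group of (normalized) discrete valuations. -/
abbrev Zm0 : Type := WithZero (Multiplicative ℤ)

/-- A (discrete, i.e. `ℤₘ₀`-valued) valuation is non-trivial if it takes a value other
than 0 and 1. -/
def isNontrivialVal {k : Type} [Field k] (v : Valuation k Zm0) : Prop :=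
  ∃ x : k, v x ≠ 0 ∧ v x ≠ 1

/-- The completion `k_v` of a field `k` with respect to a discrete valuation `v`. -/
noncomputable def valCompletion {k : Type} [Field k] (v : Valuation k Zm0) : Type :=
  letI := Valued.mk' v
  UniformSpace.Completion k

noncomputable instance valCompletion.instField {k : Type} [Field k] (v : Valuation k Zm0) :
    Field (valCompletion v) :=
  letI := Valued.mk' v
  UniformSpace.Completion.instField

/-- The canonical embedding of a field into its `v`-adic completion. -/
noncomputable def toValCompletion {k : Type} [Field k] (v : Valuation k Zm0) :
    k →+* valCompletion v :=
  letI := Valued.mk' v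
  UniformSpace.Completion.coeRingHom

/-- A quadratic form `q` over `k` satisfies `LGP(r, s)` with respect to a set `V` of
discrete valuations on `k` if `i_W(q_{k_v}) ≥ r` for all `v ∈ V` implies `i_W(q) ≥ s`. -/
def satisfiesLGP {k : Type} [Field k] (V : Set (Valuation k Zm0)) {ι : Type} [Fintype ι]
    (d : ι → k) (r s : ℕ) : Prop :=
  (∀ v ∈ V, r ≤ wittIndex (valCompletion v) (toValCompletion v ∘ d)) → s ≤ wittIndex k d

/-! Adding `m` hyperbolic planes to a regular form raises its Witt index by exactly `m` (Witt
cancellation, proved with reflections). Hence `LGP(r, s)` applied to `m·ℍ ⟂ q` gives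
`LGP(r - m, s - m)` for `q`. For the upward shift write `q ≃ i·ℍ ⟂ q_an` over `k` with
`i = i_W(q)`; this decomposition persists over every `k_v`, because an isometry of diagonal forms
is a congruence `Aᵀ diag(e) A = diag(d)`, which survives base change. So `(i - m)·ℍ ⟂ q_an` has
all local indices at least `r`, hence its global index `i - m` is at least `s ≥ 1`, and
`i ≥ s + m`. -/

open QuadraticMap Matrix

namespace QuadraticForm

section Reflection

variable {K M : Type} [Field K] [AddCommGroup M] [Module K M] (Q : QuadraticForm K M)

noncomputable def reflectionMap (w : M) : M →ₗ[K] M :=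
  LinearMap.id - ((Q w)⁻¹ • polarBilin Q w).smulRight w

lemma reflectionMap_apply (w x : M) :
    Q.reflectionMap w x = x - ((Q w)⁻¹ * polar Q w x) • w := by
  simp [reflectionMap, polarBilin]

variable {Q} {w : M}

lemma reflectionMap_apply_of_polar_eq {x : M} (hw : Q w ≠ 0) (hx : polar Q w x = Q w) :
    Q.reflectionMap w x = x - w := by
  rw [reflectionMap_apply, hx, inv_mul_cancel₀ hw, one_smul]

lemma map_reflectionMap (hw : Q w ≠ 0) (x : M) : Q (Q.reflectionMap w x) = Q x := by
  rw [reflectionMap_apply, sub_eq_add_neg, QuadraticMap.map_add Q, ← neg_smul,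
    QuadraticMap.map_smul, polar_smul_right, polar_comm]
  field_simp
  linear_combination (polar Q x w ^ 2 * (Q w)⁻¹) * mul_inv_cancel₀ hw

lemma reflectionMap_involutive (hw : Q w ≠ 0) : Function.Involutive (Q.reflectionMap w) := by
  intro x
  have hpolar : polar Q w (Q.reflectionMap w x) = -polar Q w x := by
    rw [reflectionMap_apply, polar_sub_right, polar_smul_right, polar_self, smul_eq_mul,
      nsmul_eq_mul]
    field_simp
    ring
  rw [reflectionMap_apply Q w (Q.reflectionMap w x), hpolar, reflectionMap_apply]
  module

noncomputable def reflection (hw : Q w ≠ 0) : Q.IsometryEquiv Q :=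
  { LinearEquiv.ofInvolutive (Q.reflectionMap w) (reflectionMap_involutive hw) with
    map_app' := map_reflectionMap hw }

lemma reflection_apply (hw : Q w ≠ 0) (x : M) : reflection hw x = Q.reflectionMap w x := rfl

lemma exists_isometryEquiv_apply_eq [Invertible (2 : K)] {u v : M} (huv : Q u = Q v)
    (hv : Q v ≠ 0) : ∃ σ : Q.IsometryEquiv Q, σ u = v := by
  have hsub : Q (u - v) = 2 * Q v - polar Q u v := by
    rw [sub_eq_add_neg, QuadraticMap.map_add Q, QuadraticMap.map_neg, polar_neg_right, huv]; ring
  have hadd : Q (u + v) = 2 * Q v + polar Q u v := by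
    rw [QuadraticMap.map_add Q, huv]; ring
  -- `Q (u - v) + Q (u + v) = 4 Q v ≠ 0`: reflect in `u - v`, or else in `u + v` and then `v`.
  by_cases hm : Q (u - v) = 0
  · have hp : Q (u + v) ≠ 0 := by
      intro h
      have h4 : (2 : K) * (2 * Q v) = 0 := by linear_combination h + hm - hadd - hsub
      simp [Invertible.ne_zero (2 : K), hv] at h4
    have hpolar : polar Q (u + v) u = Q (u + v) := by
      rw [polar_add_left, polar_self, polar_comm, huv, hadd, nsmul_eq_mul, Nat.cast_ofNat]
    refine ⟨(reflection hp).trans (reflection hv), ?_⟩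
    show Q.reflectionMap v (Q.reflectionMap (u + v) u) = v
    rw [reflectionMap_apply_of_polar_eq hp hpolar, sub_add_cancel_left, map_neg,
      reflectionMap_apply, polar_self, nsmul_eq_mul, Nat.cast_ofNat, mul_comm (2 : K),
      inv_mul_cancel_left₀ hv]
    module
  · have hpolar : polar Q (u - v) u = Q (u - v) := by
      rw [polar_sub_left, polar_self, polar_comm, huv, hsub, nsmul_eq_mul, Nat.cast_ofNat]
    exact ⟨reflection hm, by rw [reflection_apply, reflectionMap_apply_of_polar_eq hm hpolar,
      sub_sub_cancel]⟩

end Reflection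

section Cancel

variable {K M₁ M₂ : Type} [Field K] [AddCommGroup M₁] [Module K M₁] [AddCommGroup M₂]
  [Module K M₂] {q : QuadraticForm K K} {Q₁ : QuadraticForm K M₁} {Q₂ : QuadraticForm K M₂}

lemma fst_isometryEquiv_apply_inr_eq_zero [Invertible (2 : K)] (hq : q 1 ≠ 0)
    (χ : (q.prod Q₁).IsometryEquiv (q.prod Q₂)) (hχ : χ (1, 0) = (1, 0)) (m : M₁) :
    (χ (0, m)).1 = 0 := by
  have hpolar : polar (q.prod Q₂) (χ (0, m)) (χ (1, 0)) = polar (q.prod Q₁) (0, m) (1, 0) := by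
    simp only [polar, ← map_add χ, χ.map_app]
  have hq_polar (a : K) : polar q a 1 = 2 * a * q 1 := by
    have hq_apply (x : K) : q x = x * x * q 1 := by
      conv_lhs => rw [← mul_one x, ← smul_eq_mul, QuadraticMap.map_smul, smul_eq_mul]
    rw [polar, hq_apply (a + 1), hq_apply a]
    ring
  rw [hχ, polar_prod, polar_prod] at hpolar
  simp only [polar_zero_right, add_zero, hq_polar] at hpolar
  simpa [Invertible.ne_zero (2 : K), hq] using hpolar

lemma Equivalent.cancel_left [Invertible (2 : K)] (hq : q 1 ≠ 0)
    (h : (q.prod Q₁).Equivalent (q.prod Q₂)) : Q₁.Equivalent Q₂ := by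
  obtain ⟨f⟩ := h
  -- Correct `f` so that it fixes `(1, 0)`; it then maps `{0} × M₁ = (1, 0)ᗮ` onto `{0} × M₂`.
  obtain ⟨σ, hσ⟩ := exists_isometryEquiv_apply_eq (Q := q.prod Q₂) (u := f (1, 0)) (v := (1, 0))
    (by rw [f.map_app]; simp) (by simpa using hq)
  set χ := f.trans σ
  have hχ : χ (1, 0) = (1, 0) := hσ
  have hχ_symm : χ.symm (1, 0) = (1, 0) := by rw [← hχ]; exact χ.symm_apply_apply _
  have hinr (m : M₁) : χ (0, m) = (0, (χ (0, m)).2) :=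
    Prod.ext (fst_isometryEquiv_apply_inr_eq_zero hq χ hχ m) rfl
  have hinr_symm (n : M₂) : χ.symm (0, n) = (0, (χ.symm (0, n)).2) :=
    Prod.ext (fst_isometryEquiv_apply_inr_eq_zero hq χ.symm hχ_symm n) rfl
  let g : M₁ →ₗ[K] M₂ := .snd K K M₂ ∘ₗ χ.toLinearEquiv.toLinearMap ∘ₗ .inr K K M₁
  let g' : M₂ →ₗ[K] M₁ := .snd K K M₁ ∘ₗ χ.symm.toLinearEquiv.toLinearMap ∘ₗ .inr K K M₂
  have hgg' : g ∘ₗ g' = .id := by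
    ext n
    change (χ (0, (χ.symm (0, n)).2)).2 = n
    rw [← hinr_symm, χ.apply_symm_apply]
  have hg'g : g' ∘ₗ g = .id := by
    ext m
    change (χ.symm (0, (χ (0, m)).2)).2 = m
    rw [← hinr, χ.symm_apply_apply]
  refine ⟨{ LinearEquiv.ofLinearMap (re₁₂ := .ids) (re₂₁ := .ids) g g' hgg' hg'g with
    map_app' := fun m => ?_ }⟩
  change Q₂ (χ (0, m)).2 = Q₁ m
  have h := χ.map_app (0, m)
  rw [hinr m] at h
  simpa using h

end Cancel

end QuadraticForm

section Diagonal

variable {K : Type} [Field K] {ι κ : Type} [Fintype ι] [Fintype κ]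

lemma diagQF_apply (d x : ι → K) : diagQF K d x = ∑ i, d i * (x i * x i) := by
  simp [diagQF, weightedSumSquares_apply]

lemma polar_diagQF (d x y : ι → K) :
    polar (diagQF K d) x y = 2 * ∑ i, d i * (x i * y i) := by
  simp only [polar, diagQF_apply, Pi.add_apply, Finset.mul_sum, ← Finset.sum_sub_distrib]
  exact Finset.sum_congr rfl fun i _ => by ring

lemma diagQF_eq_dotProduct [DecidableEq ι] (d x : ι → K) :
    diagQF K d x = x ⬝ᵥ (diagonal d *ᵥ x) := by
  simp only [diagQF_apply, dotProduct, mulVec_diagonal]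
  exact Finset.sum_congr rfl fun i _ => by ring

lemma QuadraticForm.toMatrix'_diagQF [DecidableEq ι] [Invertible (2 : K)] (d : ι → K) :
    QuadraticForm.toMatrix' (diagQF K d) = diagonal d := by
  ext i j
  rw [QuadraticForm.toMatrix', LinearMap.toMatrix₂'_apply, associated_apply, ← polar,
    polar_diagQF]
  rcases eq_or_ne i j with rfl | hij
  · simp [Pi.single_apply, inv_mul_cancel_left₀ (Invertible.ne_zero (2 : K))]
  · simp [Pi.single_apply, hij, Ne.symm hij]

lemma diagQF_sumElim_equivalent_prod (d : ι → K) (e : κ → K) :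
    (diagQF K (Sum.elim d e)).Equivalent ((diagQF K d).prod (diagQF K e)) :=
  ⟨{ LinearEquiv.sumArrowLequivProdArrow ι κ K K with
    map_app' := fun x => by simp [diagQF_apply, Fintype.sum_sum_type] }⟩

end Diagonal

namespace FormIsom

variable {K L : Type} [Field K] [Field L] {ι κ μ ν : Type} [Fintype ι] [Fintype κ] [Fintype μ]
  [Fintype ν]

lemma of_linearEquiv {d : ι → K} {e : κ → K} (f : (ι → K) ≃ₗ[K] (κ → K))
    (hf : ∀ x, diagQF K e (f x) = diagQF K d x) : FormIsom K d e :=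
  ⟨{ f with map_app' := hf }⟩

lemma refl (d : ι → K) : FormIsom K d d := Equivalent.refl _

lemma symm {d : ι → K} {e : κ → K} (h : FormIsom K d e) : FormIsom K e d := Equivalent.symm h

lemma trans {d : ι → K} {e : κ → K} {f : μ → K} (h : FormIsom K d e) (h' : FormIsom K e f) :
    FormIsom K d f :=
  Equivalent.trans h h'

lemma comp_equiv (σ : ι ≃ κ) (d : κ → K) : FormIsom K (d ∘ σ) d := by
  refine .of_linearEquiv (LinearEquiv.funCongrLeft K K σ.symm) fun x => ?_
  rw [diagQF_apply, diagQF_apply, ← Equiv.sum_comp σ]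
  simp [LinearEquiv.funCongrLeft_apply]

lemma sumElim {d₁ : ι → K} {e₁ : κ → K} {d₂ : μ → K} {e₂ : ν → K} (h₁ : FormIsom K d₁ e₁)
    (h₂ : FormIsom K d₂ e₂) : FormIsom K (Sum.elim d₁ d₂) (Sum.elim e₁ e₂) :=
  (diagQF_sumElim_equivalent_prod d₁ d₂).trans
    ((h₁.prod h₂).trans (diagQF_sumElim_equivalent_prod e₁ e₂).symm)

lemma sumElim_assoc (a : ι → K) (b : κ → K) (c : μ → K) :
    FormIsom K (Sum.elim (Sum.elim a b) c) (Sum.elim a (Sum.elim b c)) := by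
  convert comp_equiv (Equiv.sumAssoc ι κ μ) (Sum.elim a (Sum.elim b c)) using 1
  ext ((x | x) | x) <;> rfl

lemma sumElim_of_isEmpty [IsEmpty ι] (d : ι → K) (e : κ → K) : FormIsom K (Sum.elim d e) e := by
  convert comp_equiv (Equiv.emptySum ι κ) e using 1
  ext (x | x)
  · exact isEmptyElim x
  · rfl

lemma cancel_left [Invertible (2 : K)] {a : K} (ha : a ≠ 0) {d : ι → K} {e : κ → K}
    (h : FormIsom K (Sum.elim (fun _ : Fin 1 => a) d) (Sum.elim (fun _ : Fin 1 => a) e)) :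
    FormIsom K d e := by
  have hline : (diagQF K fun _ : Fin 1 => a).Equivalent (a • QuadraticMap.sq) :=
    ⟨{ LinearEquiv.funUnique (Fin 1) K K with map_app' := fun x => by simp [diagQF_apply] }⟩
  refine QuadraticForm.Equivalent.cancel_left (q := a • QuadraticMap.sq) (by simpa using ha) ?_
  exact ((hline.symm.prod (.refl _)).trans (diagQF_sumElim_equivalent_prod _ _).symm).trans
    (Equivalent.trans h ((diagQF_sumElim_equivalent_prod _ _).trans (hline.prod (.refl _))))

lemma of_matrix [DecidableEq ι] [DecidableEq κ] {d : ι → K} {e : κ → K} (A : Matrix κ ι K)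
    (B : Matrix ι κ K) (hAB : A * B = 1) (hBA : B * A = 1)
    (h : Aᵀ * diagonal e * A = diagonal d) : FormIsom K d e := by
  refine .of_linearEquiv (.ofLinearMap (toLin' A) (toLin' B) ?_ ?_) fun x => ?_
  · rw [← toLin'_mul, hAB, toLin'_one]
  · rw [← toLin'_mul, hBA, toLin'_one]
  · change diagQF K e (A *ᵥ x) = diagQF K d x
    rw [diagQF_eq_dotProduct, diagQF_eq_dotProduct, ← h, ← mulVec_mulVec, ← mulVec_mulVec,
      dotProduct_mulVec x Aᵀ, vecMul_transpose]

lemma exists_matrix [DecidableEq ι] [DecidableEq κ] [Invertible (2 : K)] {d : ι → K} {e : κ → K}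
    (h : FormIsom K d e) : ∃ (A : Matrix κ ι K) (B : Matrix ι κ K),
      A * B = 1 ∧ B * A = 1 ∧ Aᵀ * diagonal e * A = diagonal d := by
  obtain ⟨f⟩ := h
  have hcomp : (diagQF K e).comp f.toLinearEquiv.toLinearMap = diagQF K d :=
    QuadraticMap.ext f.map_app
  refine ⟨LinearMap.toMatrix' f.toLinearEquiv.toLinearMap,
    LinearMap.toMatrix' f.toLinearEquiv.symm.toLinearMap, ?_, ?_, ?_⟩
  · rw [← LinearMap.toMatrix'_comp, LinearEquiv.comp_symm, LinearMap.toMatrix'_id]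
  · rw [← LinearMap.toMatrix'_comp, LinearEquiv.symm_comp, LinearMap.toMatrix'_id]
  · rw [← QuadraticForm.toMatrix'_diagQF, ← QuadraticForm.toMatrix'_comp, hcomp,
      QuadraticForm.toMatrix'_diagQF]

lemma map [Invertible (2 : K)] (φ : K →+* L) {d : ι → K} {e : κ → K} (h : FormIsom K d e) :
    FormIsom L (φ ∘ d) (φ ∘ e) := by
  classical
  obtain ⟨A, B, hAB, hBA, h⟩ := h.exists_matrix
  refine of_matrix (A.map φ) (B.map φ) ?_ ?_ ?_
  · rw [← Matrix.map_mul, hAB, Matrix.map_one _ φ.map_zero φ.map_one]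
  · rw [← Matrix.map_mul, hBA, Matrix.map_one _ φ.map_zero φ.map_one]
  · have hdiag : diagonal (φ ∘ e) = (diagonal e).map φ := (diagonal_map φ.map_zero).symm
    rw [← transpose_map, hdiag, ← Matrix.map_mul, ← Matrix.map_mul, h]
    exact diagonal_map φ.map_zero

lemma ne_zero_of_forall_ne_zero [Invertible (2 : K)] {d : ι → K} {e : κ → K} (h : FormIsom K d e)
    (hd : ∀ i, d i ≠ 0) (t : κ) : e t ≠ 0 := by
  classical
  obtain ⟨A, B, hAB, hBA, h⟩ := h.exists_matrix
  intro het
  have hcol : Aᵀ * diagonal e = diagonal d * B := by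
    rw [← h, Matrix.mul_assoc, hAB, Matrix.mul_one]
  have hB (i : ι) : B i t = 0 := by
    have := congrFun (congrFun hcol i) t
    rw [mul_diagonal, diagonal_mul, het, mul_zero] at this
    exact (mul_eq_zero.1 this.symm).resolve_left (hd i)
  simpa [Matrix.mul_apply, hB] using congrFun (congrFun hAB t) t

end FormIsom

section Hyperbolic

variable {K L : Type} [Field K] [Field L]

lemma hypForm_ne_zero (m : ℕ) (j : Fin (2 * m)) : hypForm K m j ≠ 0 := by
  unfold hypForm; split_ifs <;> simp

lemma sumElim_hypForm_ne_zero {ι : Type} (m : ℕ) {d : ι → K} (hd : ∀ i, d i ≠ 0) :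
    ∀ t, Sum.elim (hypForm K m) d t ≠ 0
  | .inl j => hypForm_ne_zero m j
  | .inr i => hd i

lemma comp_hypForm (φ : K →+* L) (m : ℕ) : φ ∘ hypForm K m = hypForm L m := by
  funext j
  simp [hypForm, apply_ite φ]

lemma formIsom_hypForm_one :
    FormIsom K (hypForm K 1) (Sum.elim (fun _ : Fin 1 => (1 : K)) (fun _ : Fin 1 => -1)) := by
  convert (FormIsom.comp_equiv (finSumFinEquiv (m := 1) (n := 1)) (hypForm K 1)).symm using 1
  ext (x | x) <;> fin_cases x <;> rfl

lemma formIsom_sumElim_hypForm_add {ι : Type} [Fintype ι] (a b : ℕ) (d : ι → K) :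
    FormIsom K (Sum.elim (hypForm K (a + b)) d)
      (Sum.elim (hypForm K a) (Sum.elim (hypForm K b) d)) := by
  have hsplit : FormIsom K (Sum.elim (hypForm K a) (hypForm K b)) (hypForm K (a + b)) := by
    convert FormIsom.comp_equiv (finSumFinEquiv.trans (finCongr (mul_add 2 a b).symm))
      (hypForm K (a + b)) using 1
    ext (x | x) <;> simp [hypForm]
  exact (hsplit.symm.sumElim (.refl d)).trans (FormIsom.sumElim_assoc _ _ _)

lemma FormIsom.cancel_hypForm [Invertible (2 : K)] {ι κ : Type} [Fintype ι] [Fintype κ]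
    (m : ℕ) {d : ι → K} {e : κ → K}
    (h : FormIsom K (Sum.elim (hypForm K m) d) (Sum.elim (hypForm K m) e)) : FormIsom K d e := by
  induction m generalizing ι κ with
  | zero =>
    have : IsEmpty (Fin (2 * 0)) := Fin.isEmpty'
    exact (sumElim_of_isEmpty _ d).symm.trans (h.trans (sumElim_of_isEmpty _ e))
  | succ m ih =>
    have h' := ih ((formIsom_sumElim_hypForm_add m 1 d).symm.trans
      (h.trans (formIsom_sumElim_hypForm_add m 1 e)))
    have hsplit {τ : Type} [Fintype τ] (c : τ → K) : FormIsom K (Sum.elim (hypForm K 1) c)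
        (Sum.elim (fun _ : Fin 1 => 1) (Sum.elim (fun _ : Fin 1 => -1) c)) :=
      (formIsom_hypForm_one.sumElim (.refl c)).trans (sumElim_assoc _ _ _)
    exact cancel_left (neg_ne_zero.2 one_ne_zero)
      (cancel_left one_ne_zero ((hsplit d).symm.trans (h'.trans (hsplit e))))

end Hyperbolic

section WittIndex

variable {K L : Type} [Field K] [Field L] {ι κ : Type} [Fintype ι] [Fintype κ]

lemma bddAbove_wittIndex_set (d : ι → K) :
    BddAbove {m : ℕ | ∃ (s : ℕ) (e : Fin s → K), FormIsom K d (Sum.elim (hypForm K m) e)} := by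
  refine ⟨Fintype.card ι, fun m ⟨s, e, ⟨f⟩⟩ => ?_⟩
  have hdim := f.toLinearEquiv.finrank_eq
  simp only [Module.finrank_fintype_fun_eq_card, Fintype.card_sum, Fintype.card_fin] at hdim
  omega

lemma le_wittIndex {m : ℕ} {d : ι → K} {e : κ → K}
    (h : FormIsom K d (Sum.elim (hypForm K m) e)) : m ≤ wittIndex K d :=
  le_csSup (bddAbove_wittIndex_set d) ⟨_, e ∘ (Fintype.equivFin κ).symm,
    h.trans ((FormIsom.refl _).sumElim (FormIsom.comp_equiv _ e).symm)⟩

lemma exists_formIsom_sumElim_hypForm_wittIndex (d : ι → K) :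
    ∃ (s : ℕ) (e : Fin s → K), FormIsom K d (Sum.elim (hypForm K (wittIndex K d)) e) := by
  have : IsEmpty (Fin (2 * 0)) := Fin.isEmpty'
  have h0 : FormIsom K d (Sum.elim (hypForm K 0) (d ∘ (Fintype.equivFin ι).symm)) :=
    (FormIsom.comp_equiv _ d).symm.trans (FormIsom.sumElim_of_isEmpty _ _).symm
  refine Nat.sSup_mem ?_ (bddAbove_wittIndex_set d)
  exact ⟨0, _, _, h0⟩

lemma wittIndex_congr {d : ι → K} {e : κ → K} (h : FormIsom K d e) :
    wittIndex K d = wittIndex K e := by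
  obtain ⟨_, d', hd'⟩ := exists_formIsom_sumElim_hypForm_wittIndex d
  obtain ⟨_, e', he'⟩ := exists_formIsom_sumElim_hypForm_wittIndex e
  exact le_antisymm (le_wittIndex (h.symm.trans hd')) (le_wittIndex (h.trans he'))

lemma wittIndex_comp_equiv (σ : κ ≃ ι) (d : ι → K) : wittIndex K (d ∘ σ) = wittIndex K d :=
  wittIndex_congr (FormIsom.comp_equiv σ d)

lemma wittIndex_sumElim_hypForm [Invertible (2 : K)] (m : ℕ) (d : ι → K) :
    wittIndex K (Sum.elim (hypForm K m) d) = m + wittIndex K d := by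
  refine le_antisymm ?_ ?_
  · obtain ⟨_, e, he⟩ := exists_formIsom_sumElim_hypForm_wittIndex (Sum.elim (hypForm K m) d)
    rcases le_or_gt (wittIndex K (Sum.elim (hypForm K m) d)) m with hle | hlt
    · omega
    obtain ⟨t, ht⟩ := Nat.exists_eq_add_of_le hlt.le
    rw [ht] at he ⊢
    have := le_wittIndex (FormIsom.cancel_hypForm m (he.trans (formIsom_sumElim_hypForm_add m t e)))
    omega
  · obtain ⟨_, e, he⟩ := exists_formIsom_sumElim_hypForm_wittIndex d
    exact le_wittIndex (((FormIsom.refl _).sumElim he).trans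
      (formIsom_sumElim_hypForm_add m _ e).symm)

lemma wittIndex_map_sumElim_hypForm [Invertible (2 : K)] (φ : K →+* L) (m : ℕ) (d : ι → K) :
    wittIndex L (φ ∘ Sum.elim (hypForm K m) d) = m + wittIndex L (φ ∘ d) := by
  have : Invertible (2 : L) :=
    invertibleOfNonzero (map_ofNat φ 2 ▸ (map_ne_zero φ).2 (Invertible.ne_zero (2 : K)))
  rw [Sum.comp_elim, comp_hypForm, wittIndex_sumElim_hypForm]

end WittIndex

section LGP

variable {k : Type} [Field k] {V : Set (Valuation k Zm0)} {r s : ℕ} {ι : Type} [Fintype ι]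

lemma satisfiesLGP_comp_equiv {κ : Type} [Fintype κ] (σ : κ ≃ ι) (d : ι → k) :
    satisfiesLGP V (d ∘ σ) r s ↔ satisfiesLGP V d r s := by
  simp only [satisfiesLGP, ← Function.comp_assoc, wittIndex_comp_equiv]

lemma satisfiesLGP_sub [Invertible (2 : k)]
    (hLGP : ∀ {ι : Type} [Fintype ι] (d : ι → k), (∀ i, d i ≠ 0) → satisfiesLGP V d r s)
    (m : ℕ) {d : ι → k} (hd : ∀ i, d i ≠ 0) : satisfiesLGP V d (r - m) (s - m) := by
  intro hloc
  have key := hLGP _ (sumElim_hypForm_ne_zero m hd) fun v hv => by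
    have := hloc v hv
    rw [wittIndex_map_sumElim_hypForm]
    omega
  rw [wittIndex_sumElim_hypForm] at key
  omega

lemma satisfiesLGP_add [Invertible (2 : k)]
    (hLGP : ∀ {ι : Type} [Fintype ι] (d : ι → k), (∀ i, d i ≠ 0) → satisfiesLGP V d r s)
    (hs : 1 ≤ s) (m : ℕ) {d : ι → k} (hd : ∀ i, d i ≠ 0) :
    satisfiesLGP V d (r + m) (s + m) := by
  intro hloc
  obtain ⟨_, e, he⟩ := exists_formIsom_sumElim_hypForm_wittIndex d
  set w := wittIndex k d
  have he_aniso : wittIndex k e = 0 := by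
    have := wittIndex_congr he
    rw [wittIndex_sumElim_hypForm] at this
    omega
  have he_ne (i) : e i ≠ 0 := he.ne_zero_of_forall_ne_zero hd (.inr i)
  -- `w - m` truncates at `0`: if `w ≤ m`, then `key` below reads `s ≤ 0`.
  have key := hLGP _ (sumElim_hypForm_ne_zero (w - m) he_ne) fun v hv => by
    have := hloc v hv
    rw [wittIndex_congr (he.map (toValCompletion v)), wittIndex_map_sumElim_hypForm] at this
    rw [wittIndex_map_sumElim_hypForm]
    omega
  rw [wittIndex_sumElim_hypForm, he_aniso] at key
  omega

end LGP

theorem statement10_general (k : Type) [Field k] (hchar : ringChar k ≠ 2)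
    (V : Set (Valuation k Zm0)) (r s : ℕ) (hs : 1 ≤ s)
    (hall : ∀ (n : ℕ) (d : Fin n → k), (∀ t, d t ≠ 0) → satisfiesLGP V d r s)
    (j : ℤ) :
    ∀ (n : ℕ) (d : Fin n → k), (∀ t, d t ≠ 0) →
      satisfiesLGP V d ((r : ℤ) + j).toNat ((s : ℤ) + j).toNat := by
  have : Invertible (2 : k) := invertibleOfNonzero (Ring.two_ne_zero hchar)
  have hLGP {ι : Type} [Fintype ι] (d : ι → k) (hd : ∀ i, d i ≠ 0) : satisfiesLGP V d r s :=
    (satisfiesLGP_comp_equiv (Fintype.equivFin ι).symm d).1 (hall _ _ fun _ => hd _)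
  intro n d hd
  obtain ⟨m, rfl | rfl⟩ := Int.eq_nat_or_neg j
  · rw [show ((r : ℤ) + m).toNat = r + m by omega, show ((s : ℤ) + m).toNat = s + m by omega]
    exact satisfiesLGP_add hLGP hs m hd
  · rw [show ((r : ℤ) + -m).toNat = r - m by omega, show ((s : ℤ) + -m).toNat = s - m by omega]
    exact satisfiesLGP_sub hLGP m hd

/-- **Theorem (shifting `r` and `s` together in LGP).**  Let `k` be a field of
characteristic ≠ 2 equipped with a non-empty set `V` of non-trivial discrete valuations.
If there are integers `r, s ≥ 1` such that all quadratic forms over `k` satisfy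
`LGP(r, s)` with respect to `V`, then for any integer `j` (not necessarily positive)
with `r + j ≥ 1` and `s + j ≥ 1`, all quadratic forms over `k` satisfy
`LGP(r + j, s + j)` with respect to `V`. -/
theorem statement10 (k : Type) [Field k] (hchar : ringChar k ≠ 2)
    (V : Set (Valuation k Zm0)) (hV : V.Nonempty) (hVnt : ∀ v ∈ V, isNontrivialVal v)
    (r s : ℕ) (hr : 1 ≤ r) (hs : 1 ≤ s)
    (hall : ∀ (n : ℕ) (d : Fin n → k), (∀ t, d t ≠ 0) → satisfiesLGP V d r s)
    (j : ℤ) (hj1 : 1 ≤ (r : ℤ) + j) (hj2 : 1 ≤ (s : ℤ) + j) :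
    ∀ (n : ℕ) (d : Fin n → k), (∀ t, d t ≠ 0) →
      satisfiesLGP V d ((r : ℤ) + j).toNat ((s : ℤ) + j).toNat :=
  statement10_general k hchar V r s hs hall j
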